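/- arXiv:1907.10656 — 2 statements merged into one kernel-verified Lean document; each statement's English description precedes it below -/
import Mathlib

section
/- Let (A,B) be a nonempty, bounded, closed and convex pair in a convex metric space (X,d,W) with property (C), and suppose T : A ∪ B → A ∪ B is a cyclic contraction. Then T has a best proximity point, i.e., there exists u ∈ A ∪ B with d(u,Tu) = dist(A,B). -/
/-- `dist(A,B) = inf{d(a,b) : a ∈ A, b ∈ B}`. -/
noncomputable def setDist {X : Type*} [MetricSpace X] (A B : Set X) : ℝ :=
  sInf {r | ∃ a ∈ A, ∃ b ∈ B, r = dist a b}

/-- `K` is convex with respect to the convex structure `W`. -/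
def WConvex {X : Type*} (W : X → X → ℝ → X) (K : Set X) : Prop :=
  ∀ u ∈ K, ∀ v ∈ K, ∀ l ∈ Set.Icc (0:ℝ) 1, W u v l ∈ K

/-- A convex metric space has property (C) if every bounded decreasing net of nonempty
closed subsets has nonempty intersection. -/
def PropertyC (X : Type*) [MetricSpace X] : Prop :=
  ∀ (ι : Type) [Nonempty ι] [Preorder ι] [IsDirected ι (· ≤ ·)] (F : ι → Set X),
    (∀ i, (F i).Nonempty) → (∀ i, IsClosed (F i)) → (∀ i, Bornology.IsBounded (F i)) →
    (∀ i j, i ≤ j → F j ⊆ F i) → (⋂ i, F i).Nonempty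

/-! Iterate `A ↦ cl T(B)`, `B ↦ cl T(A)` starting from `(A, B)`. The contraction inequality
passes to closures, so at stage `n` all distances between the two sets are at most
`dist(A,B) + kⁿ (C - dist(A,B))`, where `C` bounds the distances in `A ∪ B`. The first
components are nonempty, closed, bounded and decreasing, so property (C) gives `u` in all of
them; then `T u` lies in every second component, which forces `d(u, Tu) ≤ dist(A,B)`. -/

open Filter Topology

theorem setDist_le_dist {X : Type*} [MetricSpace X] {A B : Set X} {a b : X}
    (ha : a ∈ A) (hb : b ∈ B) : setDist A B ≤ dist a b :=
  csInf_le ⟨0, by rintro r ⟨a, -, b, -, rfl⟩; exact dist_nonneg⟩ ⟨a, ha, b, hb, rfl⟩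

theorem dist_le_of_mem_closure_of_forall {X : Type*} [PseudoMetricSpace X] {s t : Set X}
    {r : ℝ} (h : ∀ a ∈ s, ∀ b ∈ t, dist a b ≤ r) {x y : X} (hx : x ∈ closure s)
    (hy : y ∈ closure t) : dist x y ≤ r := by
  simpa only [closure_Iic, Set.mem_Iic] using
    map_mem_closure₂ (u := Set.Iic r) continuous_dist hx hy h

theorem le_of_forall_le_add_pow_mul {x δ k c : ℝ} (hk0 : 0 ≤ k) (hk1 : k < 1)
    (h : ∀ n : ℕ, x ≤ δ + k ^ n * c) : x ≤ δ := by
  have hlim : Tendsto (fun n : ℕ => δ + k ^ n * c) atTop (𝓝 δ) := by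
    simpa using tendsto_const_nhds.add
      ((tendsto_pow_atTop_nhds_zero_of_lt_one hk0 hk1).mul_const c)
  exact ge_of_tendsto' hlim h

section CyclicIterates

variable {X : Type*} [TopologicalSpace X] (T : X → X) (A B : Set X)

def cyclicIterates : ℕ → Set X × Set X
  | 0 => (A, B)
  | n + 1 => (closure (T '' (cyclicIterates n).2), closure (T '' (cyclicIterates n).1))

variable {T A B}

theorem cyclicIterates_subset (hAc : IsClosed A) (hBc : IsClosed B)
    (hTA : ∀ a ∈ A, T a ∈ B) (hTB : ∀ b ∈ B, T b ∈ A) (n : ℕ) :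
    cyclicIterates T A B n ≤ (A, B) := by
  induction n with
  | zero => exact le_rfl
  | succ n ih =>
    exact ⟨closure_minimal (by rintro _ ⟨b, hb, rfl⟩; exact hTB b (ih.2 hb)) hAc,
      closure_minimal (by rintro _ ⟨a, ha, rfl⟩; exact hTA a (ih.1 ha)) hBc⟩

theorem cyclicIterates_antitone (hAc : IsClosed A) (hBc : IsClosed B)
    (hTA : ∀ a ∈ A, T a ∈ B) (hTB : ∀ b ∈ B, T b ∈ A) :
    Antitone (cyclicIterates T A B) := by
  refine antitone_nat_of_succ_le fun n => ?_
  induction n with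
  | zero => exact cyclicIterates_subset hAc hBc hTA hTB 1
  | succ n ih =>
    exact ⟨closure_mono (Set.image_mono ih.2), closure_mono (Set.image_mono ih.1)⟩

theorem cyclicIterates_nonempty (hA : A.Nonempty) (hB : B.Nonempty) (n : ℕ) :
    (cyclicIterates T A B n).1.Nonempty ∧ (cyclicIterates T A B n).2.Nonempty := by
  induction n with
  | zero => exact ⟨hA, hB⟩
  | succ n ih => exact ⟨(ih.2.image T).closure, (ih.1.image T).closure⟩

theorem isClosed_cyclicIterates_fst (hAc : IsClosed A) :
    ∀ n, IsClosed (cyclicIterates T A B n).1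
  | 0 => hAc
  | _ + 1 => isClosed_closure

end CyclicIterates

theorem dist_cyclicIterates_le {X : Type*} [PseudoMetricSpace X] {T : X → X} {A B : Set X}
    (hAc : IsClosed A) (hBc : IsClosed B)
    (hTA : ∀ a ∈ A, T a ∈ B) (hTB : ∀ b ∈ B, T b ∈ A) {k δ C : ℝ} (hk0 : 0 ≤ k)
    (hcontr : ∀ u ∈ A, ∀ v ∈ B, dist (T u) (T v) ≤ k * dist u v + (1 - k) * δ)
    (hC : ∀ a ∈ A, ∀ b ∈ B, dist a b ≤ C) (n : ℕ) :
    ∀ x ∈ (cyclicIterates T A B n).1, ∀ y ∈ (cyclicIterates T A B n).2,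
      dist x y ≤ δ + k ^ n * (C - δ) := by
  induction n with
  | zero => intro x hx y hy; simpa using hC x hx y hy
  | succ n ih =>
    refine fun x hx y hy => dist_le_of_mem_closure_of_forall ?_ hx hy
    rintro _ ⟨v, hv, rfl⟩ _ ⟨u, hu, rfl⟩
    have hsub := cyclicIterates_subset hAc hBc hTA hTB n
    calc dist (T v) (T u) = dist (T u) (T v) := dist_comm _ _
      _ ≤ k * dist u v + (1 - k) * δ := hcontr u (hsub.1 hu) v (hsub.2 hv)
      _ ≤ k * (δ + k ^ n * (C - δ)) + (1 - k) * δ := by gcongr; exact ih u hu v hv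
      _ = δ + k ^ (n + 1) * (C - δ) := by ring

theorem cyclic_contraction_best_proximity_general {X : Type*} [MetricSpace X]
    (hC : PropertyC X)
    (A B : Set X) (hA : A.Nonempty) (hB : B.Nonempty)
    (hAb : Bornology.IsBounded A) (hBb : Bornology.IsBounded B)
    (hAc : IsClosed A) (hBc : IsClosed B)
    (T : X → X) (hTA : ∀ a ∈ A, T a ∈ B) (hTB : ∀ b ∈ B, T b ∈ A)
    (k : ℝ) (hk0 : 0 < k) (hk1 : k < 1)
    (hcontr : ∀ u ∈ A, ∀ v ∈ B,
      dist (T u) (T v) ≤ k * dist u v + (1 - k) * setDist A B) :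
    ∃ u ∈ A ∪ B, dist u (T u) = setDist A B := by
  set P := cyclicIterates T A B
  have hanti := cyclicIterates_antitone hAc hBc hTA hTB
  obtain ⟨u, hu⟩ : (⋂ n, (P n).1).Nonempty :=
    hC ℕ (fun n => (P n).1) (fun n => (cyclicIterates_nonempty hA hB n).1)
      (isClosed_cyclicIterates_fst hAc)
      (fun n => hAb.subset (cyclicIterates_subset hAc hBc hTA hTB n).1) fun i j hij => (hanti hij).1
  rw [Set.mem_iInter] at hu
  have huA : u ∈ A := hu 0
  have hTu (n : ℕ) : T u ∈ (P n).2 := (hanti n.le_succ).2 (subset_closure ⟨u, hu n, rfl⟩)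
  obtain ⟨C, hCAB⟩ := Metric.isBounded_iff.1 (hAb.union hBb)
  have hdist := dist_cyclicIterates_le hAc hBc hTA hTB hk0.le hcontr
    (fun a ha b hb => hCAB (Or.inl ha) (Or.inr hb))
  refine ⟨u, Or.inl huA, le_antisymm ?_ (setDist_le_dist huA (hTA u huA))⟩
  exact le_of_forall_le_add_pow_mul hk0.le hk1 fun n => hdist n u (hu n) (T u) (hTu n)

/-- A cyclic contraction on a nonempty bounded closed convex pair in a convex metric
space with property (C) has a best proximity point. -/
theorem cyclic_contraction_best_proximity {X : Type*} [MetricSpace X]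
    (W : X → X → ℝ → X)
    (hW : ∀ u v z : X, ∀ l ∈ Set.Icc (0:ℝ) 1,
      dist z (W u v l) ≤ l * dist z u + (1 - l) * dist z v)
    (hC : PropertyC X)
    (A B : Set X) (hA : A.Nonempty) (hB : B.Nonempty)
    (hAb : Bornology.IsBounded A) (hBb : Bornology.IsBounded B)
    (hAc : IsClosed A) (hBc : IsClosed B)
    (hAconv : WConvex W A) (hBconv : WConvex W B)
    (T : X → X) (hTA : ∀ a ∈ A, T a ∈ B) (hTB : ∀ b ∈ B, T b ∈ A)
    (k : ℝ) (hk0 : 0 < k) (hk1 : k < 1)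
    (hcontr : ∀ u ∈ A, ∀ v ∈ B,
      dist (T u) (T v) ≤ k * dist u v + (1 - k) * setDist A B) :
    ∃ u ∈ A ∪ B, dist u (T u) = setDist A B :=
  cyclic_contraction_best_proximity_general hC A B hA hB hAb hBb hAc hBc T hTA hTB k hk0 hk1 hcontr
end

section
/- Let (A,B) be a nonempty, bounded, closed and convex pair in a convex metric space (X,d,W) with property (C), with A₀ nonempty and (A,B) proximally compact. Suppose T : A ∪ B → A ∪ B is relatively Kannan nonexpansive, is a cyclic contraction, and (A,B) has proximal quasi-normal structure. Then T has a best proximity point: there exists u with d(u,Tu) = dist(A,B). -/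
open Filter

/-- `δ(A,B) = sup{d(a,b) : a ∈ A, b ∈ B}`. -/
noncomputable def setDelta {X : Type*} [MetricSpace X] (A B : Set X) : ℝ :=
  sSup {r | ∃ a ∈ A, ∃ b ∈ B, r = dist a b}

/-- `(H₁,H₂)` is a proximal pair. -/
def ProximalPair {X : Type*} [MetricSpace X] (H₁ H₂ : Set X) : Prop :=
  ∀ u ∈ H₁, ∀ v ∈ H₂, ∃ u' ∈ H₁, ∃ v' ∈ H₂,
    dist u v' = setDist H₁ H₂ ∧ dist u' v = setDist H₁ H₂

/-- `(A,B)` is proximally compact. -/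
def ProximallyCompact {X : Type*} [MetricSpace X] (A B : Set X) : Prop :=
  ∀ (ι : Type) [Nonempty ι] [Preorder ι] [IsDirected ι (· ≤ ·)]
    (u v : ι → X), (∀ i, u i ∈ A) → (∀ i, v i ∈ B) →
    Tendsto (fun i => dist (u i) (v i)) atTop (nhds (setDist A B)) →
    ∃ p ∈ A ×ˢ B, ClusterPt p (Filter.map (fun i => (u i, v i)) atTop)

/-- `(A,B)` has proximal quasi-normal structure (with respect to `W`-convexity). -/
def ProxQuasiNormal {X : Type*} [MetricSpace X] (W : X → X → ℝ → X) (A B : Set X) : Prop :=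
  ∀ H₁ H₂ : Set X, H₁.Nonempty → H₂.Nonempty → H₁ ⊆ A → H₂ ⊆ B →
    Bornology.IsBounded H₁ → Bornology.IsBounded H₂ →
    IsClosed H₁ → IsClosed H₂ → WConvex W H₁ → WConvex W H₂ →
    ProximalPair H₁ H₂ → setDist H₁ H₂ = setDist A B →
    setDist H₁ H₂ < setDelta H₁ H₂ →
    ∃ p₁ ∈ H₁, ∃ p₂ ∈ H₂,
      (∀ v ∈ H₂, dist p₁ v < setDelta H₁ H₂) ∧
      (∀ u ∈ H₁, dist u p₂ < setDelta H₁ H₂)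

/-- A relatively Kannan nonexpansive cyclic contraction on a nonempty bounded closed
convex pair with `A₀ ≠ ∅`, `(A,B)` proximally compact and proximal quasi-normal
structure, in a convex metric space with property (C), has a best proximity point. -/
theorem kannan_cyclic_contraction_best_proximity {X : Type*} [MetricSpace X]
    (W : X → X → ℝ → X)
    (hW : ∀ u v z : X, ∀ l ∈ Set.Icc (0:ℝ) 1,
      dist z (W u v l) ≤ l * dist z u + (1 - l) * dist z v)
    (hC : PropertyC X)
    (A B : Set X) (hA : A.Nonempty) (hB : B.Nonempty)
    (hAb : Bornology.IsBounded A) (hBb : Bornology.IsBounded B)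
    (hAc : IsClosed A) (hBc : IsClosed B)
    (hAconv : WConvex W A) (hBconv : WConvex W B)
    (hA₀ : {u | u ∈ A ∧ ∃ v ∈ B, dist u v = setDist A B}.Nonempty)
    (hpc : ProximallyCompact A B)
    (hpqns : ProxQuasiNormal W A B)
    (T : X → X) (hTA : ∀ a ∈ A, T a ∈ B) (hTB : ∀ b ∈ B, T b ∈ A)
    (hKannan : ∀ u ∈ A, ∀ v ∈ B,
      dist (T u) (T v) ≤ (1 / 2) * (dist u (T u) + dist v (T v)))
    (k : ℝ) (hk0 : 0 < k) (hk1 : k < 1)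
    (hcontr : ∀ u ∈ A, ∀ v ∈ B,
      dist (T u) (T v) ≤ k * dist u v + (1 - k) * setDist A B) :
    ∃ u ∈ A ∪ B, dist u (T u) = setDist A B := by
  obtain ⟨a₀, ha₀⟩ := hA
  obtain ⟨b₀, hb₀⟩ := hB
  set d₀ := setDist A B with hd₀
  have hSbd : BddBelow {r | ∃ a ∈ A, ∃ b ∈ B, r = dist a b} := by
    refine ⟨0, ?_⟩
    rintro r ⟨a, -, b, -, rfl⟩
    exact dist_nonneg
  have hle : ∀ a ∈ A, ∀ b ∈ B, d₀ ≤ dist a b := fun a ha b hb =>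
    csInf_le hSbd ⟨a, ha, b, hb, rfl⟩
  -- the orbit
  set x : ℕ → X := fun n => T^[n] a₀ with hxdef
  have hxs : ∀ n, x (n + 1) = T (x n) := fun n => Function.iterate_succ_apply' T n a₀
  have hmem : ∀ n, x (2 * n) ∈ A ∧ x (2 * n + 1) ∈ B := by
    intro n
    induction n with
    | zero =>
      have h0 : x 0 ∈ A := ha₀
      exact ⟨h0, by rw [show 2 * 0 + 1 = 0 + 1 from rfl, hxs]; exact hTA _ h0⟩
    | succ n ih =>
      have h1 : x (2 * (n + 1)) ∈ A := by
        have he : 2 * (n + 1) = (2 * n + 1) + 1 := by ring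
        rw [he, hxs]
        exact hTB _ ih.2
      exact ⟨h1, by rw [hxs]; exact hTA _ h1⟩
  have hstep : ∀ n, dist (x (n + 1)) (x (n + 2)) ≤ k * dist (x n) (x (n + 1)) + (1 - k) * d₀ := by
    intro n
    rcases Nat.even_or_odd n with ⟨m, hm⟩ | ⟨m, hm⟩
    · have hA' : x n ∈ A := by rw [hm, ← two_mul]; exact (hmem m).1
      have hB' : x (n + 1) ∈ B := by
        rw [show n + 1 = 2 * m + 1 by omega]; exact (hmem m).2
      have := hcontr _ hA' _ hB'
      rwa [← hxs n, ← hxs (n + 1)] at this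
    · have hB' : x n ∈ B := by rw [show n = 2 * m + 1 by omega]; exact (hmem m).2
      have hA' : x (n + 1) ∈ A := by
        rw [show n + 1 = 2 * (m + 1) by omega]; exact (hmem (m + 1)).1
      have := hcontr _ hA' _ hB'
      rw [← hxs n, ← hxs (n + 1)] at this
      calc dist (x (n + 1)) (x (n + 2)) = dist (x (n + 2)) (x (n + 1)) := dist_comm _ _
        _ ≤ k * dist (x (n + 1)) (x n) + (1 - k) * d₀ := this
        _ = k * dist (x n) (x (n + 1)) + (1 - k) * d₀ := by rw [dist_comm]
  set C : ℝ := dist (x 0) (x 1) - d₀ with hCdef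
  have hC0 : 0 ≤ C := by
    have := hle (x 0) ha₀ (x 1) (by rw [show (1 : ℕ) = 2 * 0 + 1 from rfl]; exact (hmem 0).2)
    simp [hCdef]; linarith
  have hgeo : ∀ n, dist (x n) (x (n + 1)) ≤ d₀ + k ^ n * C := by
    intro n
    induction n with
    | zero => simp [hCdef]
    | succ n ih =>
      have h1 := hstep n
      have h2 : k * dist (x n) (x (n + 1)) ≤ k * (d₀ + k ^ n * C) :=
        mul_le_mul_of_nonneg_left ih hk0.le
      calc dist (x (n + 1)) (x (n + 2)) ≤ k * dist (x n) (x (n + 1)) + (1 - k) * d₀ := h1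
        _ ≤ k * (d₀ + k ^ n * C) + (1 - k) * d₀ := by linarith
        _ = d₀ + k ^ (n + 1) * C := by ring
  have hdlo : ∀ n, d₀ ≤ dist (x (2 * n + 2)) (x (2 * n + 1)) := by
    intro n
    have hA' : x (2 * n + 2) ∈ A := by
      rw [show 2 * n + 2 = 2 * (n + 1) by ring]; exact (hmem (n + 1)).1
    exact hle _ hA' _ (hmem n).2
  have hdup : ∀ n, dist (x (2 * n + 2)) (x (2 * n + 1)) ≤ d₀ + k ^ n * C := by
    intro n
    have h1 : dist (x (2 * n + 1)) (x (2 * n + 2)) ≤ d₀ + k ^ (2 * n + 1) * C := hgeo (2 * n + 1)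
    have h2 : k ^ (2 * n + 1) ≤ k ^ n :=
      pow_le_pow_of_le_one hk0.le hk1.le (by omega)
    have h3 : k ^ (2 * n + 1) * C ≤ k ^ n * C := mul_le_mul_of_nonneg_right h2 hC0
    rw [dist_comm]; linarith
  have htend : Tendsto (fun n => dist (x (2 * n + 2)) (x (2 * n + 1))) atTop (nhds d₀) := by
    have h0 : Tendsto (fun n : ℕ => k ^ n * C) atTop (nhds 0) := by
      simpa using (tendsto_pow_atTop_nhds_zero_of_lt_one hk0.le hk1).mul_const C
    have hub : Tendsto (fun n : ℕ => d₀ + k ^ n * C) atTop (nhds d₀) := by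
      simpa using tendsto_const_nhds.add h0
    exact tendsto_of_tendsto_of_tendsto_of_le_of_le tendsto_const_nhds hub hdlo hdup
  have hmemA2 : ∀ n, x (2 * n + 2) ∈ A := by
    intro n
    rw [show 2 * n + 2 = 2 * (n + 1) by ring]
    exact (hmem (n + 1)).1
  obtain ⟨⟨p, q⟩, hpq, hcl⟩ := hpc ℕ (fun n => x (2 * n + 2)) (fun n => x (2 * n + 1))
    (fun n => hmemA2 n) (fun n => (hmem n).2) htend
  have hp : p ∈ A := hpq.1
  have hq : q ∈ B := hpq.2
  have hfreq : ∀ s ∈ nhds (p, q), ∃ᶠ n in atTop, (x (2 * n + 2), x (2 * n + 1)) ∈ s :=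
    mapClusterPt_iff_frequently.mp hcl
  have key : ∀ ε > (0 : ℝ), dist p (T p) ≤ d₀ + ε := by
    intro ε hε
    have hε3 : (0 : ℝ) < ε / 3 := by linarith
    obtain ⟨N, hN⟩ := (Metric.tendsto_atTop.mp htend) (ε / 3) hε3
    have hfr := hfreq (Metric.ball (p, q) (ε / 3)) (Metric.ball_mem_nhds _ hε3)
    obtain ⟨n, hnN, hball⟩ := (Filter.frequently_atTop.mp hfr) N
    have h1 : dist (x (2 * n + 2)) p < ε / 3 := by
      have := Metric.mem_ball.mp hball
      rw [Prod.dist_eq] at this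
      exact lt_of_le_of_lt (le_max_left _ _) this
    have h2 : dist (x (2 * n + 2)) (x (2 * n + 1)) ≤ d₀ + ε / 3 := by
      have := hN n hnN
      rw [Real.dist_eq] at this
      have := abs_lt.mp this
      linarith [this.1, this.2]
    have h3 : dist (T p) (T (x (2 * n + 1))) ≤ k * dist p (x (2 * n + 1)) + (1 - k) * d₀ :=
      hcontr p hp _ (hmem n).2
    have h4 : dist p (x (2 * n + 1)) ≤ dist p (x (2 * n + 2)) + dist (x (2 * n + 2)) (x (2 * n + 1)) :=
      dist_triangle _ _ _
    have h5 : dist p (x (2 * n + 2)) = dist (x (2 * n + 2)) p := dist_comm _ _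
    have h6 : dist p (T p) ≤ dist p (x (2 * n + 2)) + dist (x (2 * n + 2)) (T p) :=
      dist_triangle _ _ _
    have h7 : dist (x (2 * n + 2)) (T p) = dist (T p) (T (x (2 * n + 1))) := by
      rw [show 2 * n + 2 = (2 * n + 1) + 1 from rfl, hxs, dist_comm]
    have hkd : k * dist p (x (2 * n + 1)) ≤ k * (ε / 3 + (d₀ + ε / 3)) := by
      apply mul_le_mul_of_nonneg_left _ hk0.le
      linarith
    have hksmall : k * (ε / 3 + (d₀ + ε / 3)) ≤ ε / 3 + ε / 3 + k * d₀ := by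
      nlinarith
    linarith
  refine ⟨p, Or.inl hp, le_antisymm (le_of_forall_pos_le_add key) (hle p hp (T p) (hTA p hp))⟩
end
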